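/- arXiv:2010.00970 — 3 statements merged into one kernel-verified Lean document; each statement's English description precedes it below -/
import Mathlib

section
/- Let φ : ℕ → ℝ≥0 be nondecreasing, concave, normalized, extended piecewise linearly. Then inf_{x ∈ ℝ≥0} E[φ(Poi(x))]/φ(x) = min_{x ∈ ℕ, x ≥ 1} E[φ(Poi(x))]/φ(x); in particular the infimum over positive integers is attained. -/
/-!
The function `x ↦ E[φ(Poi x)]` is concave on `[0, ∞)`: differentiating the Poisson series twice
gives `E[Δ²φ(Poi x)] ≤ 0`. Since the extension of `φ` is linear on each `[m, m + 1]`, the ratio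
`α_φ` there is at least `min (α_φ m) (α_φ (m + 1))`, so only the positive integers matter.
At integers, Jensen gives `α_φ n ≤ 1`, while the quadratic minorant of `φ` at `n` built from
`φ k ≥ (φ n / n) min k n` gives `α_φ n ≥ 1 - 1 / √n`. Hence `α_φ n → 1` from below and the
infimum over the positive integers is a minimum.
-/

/-- The Poisson expectation `E[φ(Poi x)]`. -/
noncomputable def poiExp (φ : ℕ → ℝ) (x : ℝ) : ℝ :=
  ∑' k : ℕ, Real.exp (-x) * x ^ k / (Nat.factorial k) * φ k

/-- The piecewise linear extension of `φ : ℕ → ℝ` to `ℝ≥0`. -/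
noncomputable def phiExt (φ : ℕ → ℝ) (x : ℝ) : ℝ :=
  φ ⌊x⌋₊ + (x - ⌊x⌋₊) * (φ (⌊x⌋₊ + 1) - φ ⌊x⌋₊)

/-- The Poisson concavity ratio `α_φ(x) = E[φ(Poi x)] / φ(x)`, with `α_φ(0) = 1`. -/
noncomputable def alphaRatio (φ : ℕ → ℝ) (x : ℝ) : ℝ :=
  if x = 0 then 1 else poiExp φ x / phiExt φ x

open Filter Topology

noncomputable def poiWeight (x : ℝ) (k : ℕ) : ℝ :=
  Real.exp (-x) * x ^ k / k.factorial

noncomputable def egf (ψ : ℕ → ℝ) (x : ℝ) : ℝ :=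
  ∑' k : ℕ, ψ k * x ^ k / k.factorial

section Poisson

variable {ψ : ℕ → ℝ} {C r : ℝ}

lemma poiWeight_nonneg {x : ℝ} (hx : 0 ≤ x) (k : ℕ) : 0 ≤ poiWeight x k := by
  unfold poiWeight; positivity

lemma poiWeight_succ_mul (x : ℝ) (k : ℕ) : poiWeight x (k + 1) * (k + 1) = x * poiWeight x k := by
  rw [poiWeight, poiWeight, Nat.factorial_succ]
  push_cast
  field_simp
  ring

lemma poiExp_eq_exp_mul_egf (ψ : ℕ → ℝ) (x : ℝ) : poiExp ψ x = Real.exp (-x) * egf ψ x := by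
  rw [poiExp, egf, ← tsum_mul_left]
  congr 1 with k
  ring

lemma poiExp_zero (ψ : ℕ → ℝ) : poiExp ψ 0 = ψ 0 := by
  rw [poiExp, tsum_eq_single 0 fun k hk => by simp [hk]]
  simp

lemma hasSum_poiWeight (x : ℝ) : HasSum (poiWeight x) 1 := by
  have h := (NormedSpace.expSeries_div_hasSum_exp x).mul_left (Real.exp (-x))
  rw [← Real.exp_eq_exp_ℝ, ← Real.exp_add, neg_add_cancel, Real.exp_zero] at h
  exact h.congr_fun fun k => by rw [poiWeight, mul_div_assoc]

-- Stein's identity `E[N ψ(N)] = x E[ψ(N + 1)]` for `N ~ Poi(x)`.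
lemma HasSum.poiWeight_mul_natCast_mul {x a : ℝ}
    (h : HasSum (fun k => poiWeight x k * ψ (k + 1)) a) : HasSum (fun k => poiWeight x k * (k * ψ k)) (x * a) := by
  have h' : HasSum (fun k => poiWeight x (k + 1) * ((k + 1 : ℕ) * ψ (k + 1))) (x * a) :=
    (h.mul_left x).congr_fun fun k => by
      rw [← mul_assoc, Nat.cast_succ, poiWeight_succ_mul, mul_assoc]
  simpa using (hasSum_nat_add_iff (f := fun k => poiWeight x k * (k * ψ k)) 1).mp h'

lemma hasSum_poiWeight_mul_natCast (x : ℝ) : HasSum (fun k => poiWeight x k * k) x := by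
  have h := HasSum.poiWeight_mul_natCast_mul (ψ := fun _ => 1)
    ((hasSum_poiWeight x).congr_fun fun k => mul_one _)
  rw [mul_one] at h
  exact h.congr_fun fun k => by rw [mul_one]

lemma hasSum_poiWeight_mul_sq_sub (x : ℝ) :
    HasSum (fun k => poiWeight x k * ((k : ℝ) - x) ^ 2) x := by
  have hsucc : HasSum (fun k => poiWeight x k * ((k + 1 : ℕ) : ℝ)) (x + 1) := by
    simpa only [Nat.cast_succ, mul_add, mul_one] using
      (hasSum_poiWeight_mul_natCast x).add (hasSum_poiWeight x)
  have hsq := hsucc.poiWeight_mul_natCast_mul (ψ := fun k => (k : ℝ))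
  have h := ((hsq.sub ((hasSum_poiWeight_mul_natCast x).mul_left (2 * x))).add
    ((hasSum_poiWeight x).mul_left (x ^ 2))).congr_fun
    (g := fun k => poiWeight x k * ((k : ℝ) - x) ^ 2) fun k => by ring
  rwa [show x * (x + 1) - 2 * x * x + x ^ 2 * 1 = x by ring] at h

lemma summable_egf (hψ : ∀ k, |ψ k| ≤ C * r ^ k) (x : ℝ) :
    Summable (fun k => ψ k * x ^ k / k.factorial) := by
  refine .of_norm_bounded ((NormedSpace.expSeries_div_summable (r * |x|)).mul_left C) fun k => ?_
  rw [Real.norm_eq_abs, abs_div, abs_mul, abs_pow, Nat.abs_cast, mul_pow, ← mul_div_assoc,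
    ← mul_assoc]
  gcongr
  exact hψ k

lemma summable_poiWeight_mul (hψ : ∀ k, |ψ k| ≤ C * r ^ k) (x : ℝ) :
    Summable (fun k => poiWeight x k * ψ k) :=
  ((summable_egf hψ x).mul_left (Real.exp (-x))).congr fun k => by rw [poiWeight]; ring

lemma poiExp_le_of_le_affine (hψ : ∀ k, |ψ k| ≤ C * r ^ k) {x : ℝ} (hx : 0 ≤ x) {a b : ℝ}
    (h : ∀ k : ℕ, ψ k ≤ a + b * (k - x)) : poiExp ψ x ≤ a := by
  have hline := (((hasSum_poiWeight x).mul_left a).add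
    (((hasSum_poiWeight_mul_natCast x).sub ((hasSum_poiWeight x).mul_left x)).mul_left b)).congr_fun
    (g := fun k => poiWeight x k * (a + b * (k - x))) fun k => by ring
  rw [show a * 1 + b * (x - x * 1) = a by ring] at hline
  exact hasSum_le (fun k => mul_le_mul_of_nonneg_left (h k) (poiWeight_nonneg hx k))
    (summable_poiWeight_mul hψ x).hasSum hline

lemma le_poiExp_of_quadratic_le (hψ : ∀ k, |ψ k| ≤ C * r ^ k) {x : ℝ} (hx : 0 ≤ x) {a b : ℝ}
    (h : ∀ k : ℕ, a + b * ((k : ℝ) - x) ^ 2 ≤ ψ k) : a + b * x ≤ poiExp ψ x := by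
  have hquad := (((hasSum_poiWeight x).mul_left a).add
    ((hasSum_poiWeight_mul_sq_sub x).mul_left b)).congr_fun
    (g := fun k => poiWeight x k * (a + b * ((k : ℝ) - x) ^ 2)) fun k => by ring
  rw [mul_one] at hquad
  exact hasSum_le (fun k => mul_le_mul_of_nonneg_left (h k) (poiWeight_nonneg hx k))
    hquad (summable_poiWeight_mul hψ x).hasSum

lemma hasDerivAt_egf (hψ : ∀ k, |ψ k| ≤ C * r ^ k) (x : ℝ) :
    HasDerivAt (egf ψ) (egf (fun k => ψ (k + 1)) x) x := by
  set R := |x| + 1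
  set g' : ℕ → ℝ → ℝ := fun k y => ψ k * (k * y ^ (k - 1)) / (k.factorial : ℝ)
  set u : ℕ → ℝ := fun k => C * r ^ k * (k * R ^ (k - 1) / (k.factorial : ℝ))
  have hu : Summable u := by
    refine (summable_nat_add_iff 1).mp
      (((NormedSpace.expSeries_div_summable (r * R)).mul_left (C * r)).congr fun j => ?_)
    simp only [u, Nat.add_sub_cancel, Nat.factorial_succ]
    push_cast
    field_simp
    rw [mul_pow, pow_succ]
    ring
  have hg : ∀ k y, y ∈ Metric.ball (0 : ℝ) R →
      HasDerivAt (fun z => ψ k * z ^ k / k.factorial) (g' k y) y :=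
    fun k y _ => ((hasDerivAt_pow k y).const_mul (ψ k)).div_const _
  have hg' : ∀ k y, y ∈ Metric.ball (0 : ℝ) R → ‖g' k y‖ ≤ u k := by
    intro k y hy
    rw [mem_ball_zero_iff, Real.norm_eq_abs] at hy
    simp only [g', u, Real.norm_eq_abs, abs_div, abs_mul, abs_pow, Nat.abs_cast, mul_div_assoc]
    exact mul_le_mul (hψ k) (by gcongr) (by positivity) ((abs_nonneg _).trans (hψ k))
  have hx : x ∈ Metric.ball (0 : ℝ) R := by simp [R]
  have hsum' : Summable fun k => g' k x := .of_norm_bounded hu fun k => hg' k x hx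
  have key := hasDerivAt_tsum_of_isPreconnected hu Metric.isOpen_ball
    (convex_ball (0 : ℝ) R).isPreconnected hg hg' hx (summable_egf hψ x) hx
  refine key.congr_deriv ?_
  rw [hsum'.tsum_eq_zero_add, egf]
  simp only [g', Nat.cast_zero, zero_mul, mul_zero, zero_div, zero_add, Nat.add_sub_cancel]
  congr 1 with j
  rw [Nat.factorial_succ]
  push_cast
  field_simp

lemma hasDerivAt_poiExp (hψ : ∀ k, |ψ k| ≤ C * r ^ k) (x : ℝ) :
    HasDerivAt (poiExp ψ) (poiExp (fun k => ψ (k + 1) - ψ k) x) x := by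
  have hshift : ∀ k, |ψ (k + 1)| ≤ C * r * r ^ k := fun k => by
    rw [mul_assoc, ← pow_succ']; exact hψ (k + 1)
  have hexp : HasDerivAt (fun y => Real.exp (-y)) (-Real.exp (-x)) x := by
    simpa using (hasDerivAt_neg x).exp
  rw [show poiExp ψ = fun y => Real.exp (-y) * egf ψ y from funext (poiExp_eq_exp_mul_egf ψ)]
  refine (hexp.mul (hasDerivAt_egf hψ x)).congr_deriv ?_
  rw [poiExp_eq_exp_mul_egf, egf, egf, egf]
  simp only [sub_mul, sub_div]
  rw [(summable_egf hshift x).tsum_sub (summable_egf hψ x)]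
  ring

lemma concaveOn_poiExp (hψ : ∀ k, |ψ k| ≤ C * r ^ k)
    (hconc : ∀ k, ψ (k + 2) - ψ (k + 1) ≤ ψ (k + 1) - ψ k) :
    ConcaveOn ℝ (Set.Ici 0) (poiExp ψ) := by
  have hdiff : ∀ k, |ψ (k + 1) - ψ k| ≤ C * (r + 1) * r ^ k := fun k => by
    calc |ψ (k + 1) - ψ k| ≤ |ψ (k + 1)| + |ψ k| := abs_sub _ _
      _ ≤ C * r ^ (k + 1) + C * r ^ k := add_le_add (hψ _) (hψ _)
      _ = C * (r + 1) * r ^ k := by ring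
  refine concaveOn_of_hasDerivWithinAt2_nonpos (convex_Ici 0)
    (fun x _ => (hasDerivAt_poiExp hψ x).continuousAt.continuousWithinAt)
    (fun x _ => (hasDerivAt_poiExp hψ x).hasDerivWithinAt)
    (fun x _ => (hasDerivAt_poiExp hdiff x).hasDerivWithinAt) fun x hx => ?_
  rw [interior_Ici, Set.mem_Ioi] at hx
  refine tsum_nonpos fun k => mul_nonpos_of_nonneg_of_nonpos (poiWeight_nonneg hx.le k) ?_
  linarith [hconc k]

end Poisson

lemma exists_forall_le_of_tendsto {u : ℕ → ℝ} {L : ℝ} (hu : Tendsto u atTop (𝓝 L))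
    (hle : ∀ n, u n ≤ L) : ∃ N, ∀ n, u N ≤ u n := by
  by_cases h : ∃ n₀, u n₀ < L
  · obtain ⟨n₀, hn₀⟩ := h
    refine continuous_of_discreteTopology.exists_forall_le' n₀ ?_
    rw [cocompact_eq_atTop]
    exact (hu.eventually (lt_mem_nhds hn₀)).mono fun _ => le_of_lt
  · push Not at h
    exact ⟨0, fun n => (hle 0).trans (h n)⟩

lemma mul_phiExt_le_of_concaveOn {f : ℝ → ℝ} {φ : ℕ → ℝ} {β x : ℝ}
    (hf : ConcaveOn ℝ (Set.Ici 0) f) (h : ∀ n : ℕ, β * φ n ≤ f n) (hx : 0 ≤ x) :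
    β * phiExt φ x ≤ f x := by
  set m := ⌊x⌋₊
  set t := x - m
  have ht0 : 0 ≤ t := sub_nonneg.mpr (Nat.floor_le hx)
  have ht1 : t ≤ 1 := by have := Nat.lt_floor_add_one x; simp only [t]; linarith
  have hchord := hf.2 (Set.mem_Ici.mpr m.cast_nonneg) (Set.mem_Ici.mpr (m + 1).cast_nonneg)
    (sub_nonneg.mpr ht1) ht0 (sub_add_cancel 1 t)
  rw [smul_eq_mul, smul_eq_mul, smul_eq_mul, smul_eq_mul, Nat.cast_succ,
    show (1 - t) * m + t * (m + 1) = x by simp only [t]; ring] at hchord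
  calc β * phiExt φ x = (1 - t) * (β * φ m) + t * (β * φ (m + 1)) := by rw [phiExt]; ring
    _ ≤ (1 - t) * f m + t * f (m + 1) := by
        gcongr
        · exact h m
        · exact_mod_cast h (m + 1)
    _ ≤ f x := hchord

lemma sub_sub_sq_div_le_min {s : ℝ} (hs : 0 < s) (y z : ℝ) :
    z - s / 2 - (y - z) ^ 2 / (2 * s) ≤ min y z := by
  rcases le_total y z with h | h
  · rw [min_eq_left h]
    have hsq : 0 ≤ (z - y - s) ^ 2 / (2 * s) := by positivity
    have e : (z - y - s) ^ 2 / (2 * s) = s / 2 + (y - z) ^ 2 / (2 * s) - (z - y) := by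
      field_simp; ring
    linarith
  · rw [min_eq_right h]
    have : 0 ≤ (y - z) ^ 2 / (2 * s) := by positivity
    linarith

lemma phiExt_natCast (φ : ℕ → ℝ) (n : ℕ) : phiExt φ n = φ n := by
  simp [phiExt]

lemma alphaRatio_natCast (φ : ℕ → ℝ) {n : ℕ} (hn : n ≠ 0) :
    alphaRatio φ n = poiExp φ n / φ n := by
  rw [alphaRatio, if_neg (Nat.cast_ne_zero.mpr hn), phiExt_natCast]

section ConcaveSequence

variable {φ : ℕ → ℝ}

lemma pos_of_one_le (hφ1 : φ 1 = 1) (hmono : Monotone φ) {n : ℕ} (hn : 1 ≤ n) : 0 < φ n :=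
  (hφ1 ▸ one_pos).trans_le (hmono hn)

lemma phiExt_pos (hφ0 : φ 0 = 0) (hφ1 : φ 1 = 1) (hmono : Monotone φ) {x : ℝ} (hx : 0 < x) :
    0 < phiExt φ x := by
  have hd : 0 ≤ φ (⌊x⌋₊ + 1) - φ ⌊x⌋₊ := sub_nonneg.mpr (hmono (Nat.le_succ _))
  have ht : 0 ≤ x - ⌊x⌋₊ := sub_nonneg.mpr (Nat.floor_le hx.le)
  rw [phiExt]
  rcases Nat.eq_zero_or_pos ⌊x⌋₊ with h | h
  · simpa [h, hφ0, hφ1] using hx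
  · exact add_pos_of_pos_of_nonneg (pos_of_one_le hφ1 hmono h) (mul_nonneg ht hd)

variable (hconc : ∀ k, φ (k + 2) - φ (k + 1) ≤ φ (k + 1) - φ k)
include hconc

lemma le_add_mul_sub_of_concave (n k : ℕ) : φ k ≤ φ n + (φ (n + 1) - φ n) * (k - n) := by
  have hanti : Antitone fun k => φ (k + 1) - φ k := antitone_nat_of_succ_le hconc
  rcases le_total n k with hnk | hkn
  · induction k, hnk using Nat.le_induction with
    | base => simp
    | succ k hnk ih =>
      have := hanti hnk
      push_cast
      linarith
  · induction n, hkn using Nat.le_induction with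
    | base => simp
    | succ n hkn ih =>
      have hd := hanti (Nat.le_succ n)
      have hkn' : (k : ℝ) ≤ n := by exact_mod_cast hkn
      push_cast
      nlinarith

lemma natCast_mul_le_of_concave (h0 : 0 ≤ φ 0) {k n : ℕ} (hkn : k ≤ n) :
    (k : ℝ) * φ n ≤ n * φ k := by
  have hn := le_add_mul_sub_of_concave hconc k n
  have h0' := le_add_mul_sub_of_concave hconc k 0
  have hkn' : (k : ℝ) ≤ n := by exact_mod_cast hkn
  push_cast at h0'
  -- the tangent line at `k`, evaluated at `n` and at `0`
  nlinarith [mul_le_mul_of_nonneg_left hn k.cast_nonneg]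

variable (hmono : Monotone φ)
include hmono

lemma div_mul_min_le (h0 : 0 ≤ φ 0) {n : ℕ} (hn : 0 < n) (k : ℕ) :
    φ n / n * min (k : ℝ) n ≤ φ k := by
  have hn' : (0 : ℝ) < n := by exact_mod_cast hn
  rcases le_total k n with hkn | hnk
  · rw [min_eq_left (by exact_mod_cast hkn), div_mul_eq_mul_div, div_le_iff₀ hn']
    linarith [natCast_mul_le_of_concave hconc h0 hkn]
  · rw [min_eq_right (by exact_mod_cast hnk), div_mul_cancel₀ _ hn'.ne']
    exact hmono hnk

variable (hφ0 : φ 0 = 0) (hφ1 : φ 1 = 1)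
include hφ0 hφ1

lemma abs_le_two_pow (k : ℕ) : |φ k| ≤ 1 * 2 ^ k := by
  have hle := le_add_mul_sub_of_concave hconc 0 k
  have hk : (k : ℝ) ≤ 2 ^ k := by exact_mod_cast k.lt_two_pow_self.le
  rw [abs_of_nonneg (hφ0 ▸ hmono k.zero_le)]
  simp only [zero_add, hφ1, hφ0, Nat.cast_zero, sub_zero, one_mul] at hle ⊢
  linarith

lemma alphaRatio_natCast_le_one (n : ℕ) : alphaRatio φ n ≤ 1 := by
  rcases Nat.eq_zero_or_pos n with rfl | hn
  · simp [alphaRatio]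
  rw [alphaRatio_natCast φ hn.ne', div_le_one (pos_of_one_le hφ1 hmono hn)]
  exact poiExp_le_of_le_affine (abs_le_two_pow hconc hmono hφ0 hφ1) n.cast_nonneg
    (le_add_mul_sub_of_concave hconc n)

lemma one_sub_inv_sqrt_le_alphaRatio {n : ℕ} (hn : 1 ≤ n) : 1 - (√n)⁻¹ ≤ alphaRatio φ n := by
  have hn' : (0 : ℝ) < n := by exact_mod_cast hn
  have hφn := pos_of_one_le hφ1 hmono hn
  -- `s = √n` balances the two error terms `s / 2` and `n / (2 s)`
  set s := √(n : ℝ)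
  have hs : 0 < s := Real.sqrt_pos.mpr hn'
  have hss : s ^ 2 = n := Real.sq_sqrt hn'.le
  set c := φ n / n with hc
  have hquad : ∀ k : ℕ, c * (n - s / 2) + -(c / (2 * s)) * ((k : ℝ) - n) ^ 2 ≤ φ k := fun k =>
    calc c * (n - s / 2) + -(c / (2 * s)) * ((k : ℝ) - n) ^ 2
        = c * (n - s / 2 - ((k : ℝ) - n) ^ 2 / (2 * s)) := by ring
      _ ≤ c * min (k : ℝ) n := by gcongr; exact sub_sub_sq_div_le_min hs _ _
      _ ≤ φ k := div_mul_min_le hconc hmono hφ0.ge hn k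
  have hlow := le_poiExp_of_quadratic_le (abs_le_two_pow hconc hmono hφ0 hφ1) n.cast_nonneg hquad
  rw [alphaRatio_natCast φ (by omega), le_div_iff₀ hφn]
  calc (1 - s⁻¹) * φ n = c * (n - s / 2) + -(c / (2 * s)) * n := by
        rw [hc, ← hss]; field_simp; ring
    _ ≤ poiExp φ n := hlow

lemma tendsto_alphaRatio : Tendsto (fun n : ℕ => alphaRatio φ (n + 1 : ℕ)) atTop (𝓝 1) := by
  have hsqrt : Tendsto (fun n : ℕ => (√((n + 1 : ℕ) : ℝ))⁻¹) atTop (𝓝 0) :=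
    tendsto_inv_atTop_zero.comp <| Real.tendsto_sqrt_atTop.comp <|
      tendsto_natCast_atTop_atTop.comp (tendsto_add_atTop_nat 1)
  have hlow : Tendsto (fun n : ℕ => 1 - (√((n + 1 : ℕ) : ℝ))⁻¹) atTop (𝓝 1) := by
    simpa using hsqrt.const_sub 1
  refine tendsto_of_tendsto_of_tendsto_of_le_of_le hlow tendsto_const_nhds (fun n => ?_)
    (fun n => alphaRatio_natCast_le_one hconc hmono hφ0 hφ1 _)
  exact one_sub_inv_sqrt_le_alphaRatio hconc hmono hφ0 hφ1 (Nat.le_add_left 1 n)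

lemma le_alphaRatio_of_forall_natCast {β x : ℝ} (hβ1 : β ≤ 1)
    (hβ : ∀ n : ℕ, 1 ≤ n → β ≤ alphaRatio φ n) (hx : 0 ≤ x) : β ≤ alphaRatio φ x := by
  rcases hx.eq_or_lt with rfl | hx
  · simpa [alphaRatio] using hβ1
  rw [alphaRatio, if_neg hx.ne', le_div_iff₀ (phiExt_pos hφ0 hφ1 hmono hx)]
  refine mul_phiExt_le_of_concaveOn
    (concaveOn_poiExp (abs_le_two_pow hconc hmono hφ0 hφ1) hconc) (fun n => ?_) hx.le
  rcases Nat.eq_zero_or_pos n with rfl | hn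
  · simp [poiExp_zero, hφ0]
  · have := hβ n hn
    rwa [alphaRatio_natCast φ hn.ne', le_div_iff₀ (pos_of_one_le hφ1 hmono hn)] at this

end ConcaveSequence

theorem stmt6_general (φ : ℕ → ℝ) (hφ0 : φ 0 = 0) (hφ1 : φ 1 = 1)
    (hφmono : Monotone φ)
    (hφconc : ∀ k, φ (k + 2) - φ (k + 1) ≤ φ (k + 1) - φ k) :
    ∃ N : ℕ, 1 ≤ N ∧ IsLeast (alphaRatio φ '' Set.Ici 0) (alphaRatio φ (N : ℝ)) := by
  obtain ⟨N, hN⟩ := exists_forall_le_of_tendsto (tendsto_alphaRatio hφconc hφmono hφ0 hφ1)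
    fun n => alphaRatio_natCast_le_one hφconc hφmono hφ0 hφ1 (n + 1)
  refine ⟨N + 1, Nat.le_add_left 1 N, ⟨_, Set.mem_Ici.mpr (N + 1).cast_nonneg, rfl⟩, ?_⟩
  rintro _ ⟨x, hx, rfl⟩
  refine le_alphaRatio_of_forall_natCast hφconc hφmono hφ0 hφ1
    (alphaRatio_natCast_le_one hφconc hφmono hφ0 hφ1 _) (fun n hn => ?_) hx
  obtain ⟨m, rfl⟩ := Nat.exists_eq_add_of_le' hn
  exact hN m

/-- The infimum of `α_φ` over `[0, ∞)` is attained, at a positive integer: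
`inf_{x ≥ 0} α_φ(x) = min_{x ∈ ℕ, x ≥ 1} α_φ(x)`. -/
theorem stmt6 (φ : ℕ → ℝ) (hφnn : ∀ k, 0 ≤ φ k) (hφ0 : φ 0 = 0) (hφ1 : φ 1 = 1)
    (hφmono : Monotone φ)
    (hφconc : ∀ k, φ (k + 2) - φ (k + 1) ≤ φ (k + 1) - φ k) :
    ∃ N : ℕ, 1 ≤ N ∧ IsLeast (alphaRatio φ '' Set.Ici 0) (alphaRatio φ (N : ℝ)) :=
  stmt6_general φ hφ0 hφ1 hφmono hφconc
end

section
/- For d ∈ (0,1) and φ(x) = x^d, the function α_φ(x) = E[Poi(x)^d]/x^d is strictly increasing on [1,∞), hence min over integers x ≥ 1 equals α_φ(1) = e^{-1} ∑_{k=1}^∞ k^d/k!. -/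
/-!
Write `α(x) = e^{-x} S(x) x^{-d}` with `S(x) = ∑ k^d x^k / k!`. Since `S' = ∑ (k+1)^d x^k / k!`,
the sign of `α'(x)` is that of `x S'(x) - (x + d) S(x)`, and after shifting the index in `d S(x)`
this is the series `∑ ((k+1)^d - k^d - d (k+1)^{d-1}) x^{k+1} / k!`. Every coefficient is positive
by Bernoulli's inequality (strict concavity of `t ↦ t^d`), so `α` is strictly increasing on
`(0, ∞)` and its minimum over the positive integers is `α(1)`.
-/

open Real Set
open scoped Nat

section ExpSeries

variable {c : ℕ → ℝ} {C r : ℝ}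

lemma summable_mul_pow_div_factorial (hc : ∀ k, |c k| ≤ C * r ^ k) (x : ℝ) :
    Summable fun k => c k * x ^ k / k ! := by
  refine .of_norm_bounded ((summable_pow_div_factorial (|r| * |x|)).mul_left |C|) fun k => ?_
  have hck : |c k| ≤ |C| * |r| ^ k := by
    simpa only [abs_mul, abs_pow] using (hc k).trans (le_abs_self _)
  rw [norm_eq_abs, abs_div, abs_mul, abs_pow, Nat.abs_cast, mul_pow, ← mul_div_assoc,
    ← mul_assoc]
  gcongr

lemma hasDerivAt_tsum_mul_pow_div_factorial (hc : ∀ k, |c k| ≤ C * r ^ k) (x : ℝ) :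
    HasDerivAt (fun y => ∑' k, c k * y ^ k / k !) (∑' k, c (k + 1) * x ^ k / k !) x := by
  set R := |x| + 1
  have hbound : ∀ k, ∀ y ∈ Ioo (-R) R,
      ‖c k * (k * y ^ (k - 1)) / (k !)‖ ≤ |C| * ((2 * |r| * R) ^ k / k !) := by
    intro k y hy
    have hck : |c k| ≤ |C| * |r| ^ k := by
      simpa only [abs_mul, abs_pow] using (hc k).trans (le_abs_self _)
    have hk : (k : ℝ) ≤ 2 ^ k := by exact_mod_cast Nat.lt_two_pow_self.le
    have hy : |y| ^ (k - 1) ≤ R ^ k :=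
      (pow_le_pow_left₀ (abs_nonneg y) (abs_lt.2 hy).le _).trans
        (pow_le_pow_right₀ (by simp [R]) (Nat.sub_le k 1))
    rw [norm_eq_abs, abs_div, abs_mul, abs_mul, abs_pow, Nat.abs_cast, Nat.abs_cast, mul_pow,
      mul_pow, ← mul_div_assoc,
      show |C| * (2 ^ k * |r| ^ k * R ^ k) = |C| * |r| ^ k * (2 ^ k * R ^ k) by ring]
    gcongr
  have hxR : x ∈ Ioo (-R) R := ⟨by linarith [neg_abs_le x], by linarith [le_abs_self x]⟩
  have hderiv := hasDerivAt_tsum_of_isPreconnected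
    (g := fun k y => c k * y ^ k / k !) (g' := fun k y => c k * (k * y ^ (k - 1)) / k !)
    ((summable_pow_div_factorial _).mul_left |C|) isOpen_Ioo isPreconnected_Ioo
    (fun k y _ => ((hasDerivAt_pow k y).const_mul (c k)).div_const _) hbound
    hxR (summable_mul_pow_div_factorial hc x) hxR
  have hsummable : Summable fun k => c k * (k * x ^ (k - 1)) / k ! :=
    .of_norm_bounded ((summable_pow_div_factorial _).mul_left |C|)
      fun k => hbound k x hxR
  refine hderiv.congr_deriv ?_
  rw [hsummable.tsum_eq_zero_add]
  simp only [CharP.cast_eq_zero, zero_mul, mul_zero, zero_div, zero_add, Nat.add_sub_cancel,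
    Nat.factorial_succ, Nat.cast_mul, Nat.cast_succ]
  refine tsum_congr fun k => ?_
  field_simp

end ExpSeries

section PoissonMoment

variable {d : ℝ}

lemma abs_natCast_rpow_le_two_pow (hd : d ≤ 1) (k : ℕ) : |(k : ℝ) ^ d| ≤ 2 ^ k := by
  rw [abs_of_nonneg (by positivity)]
  rcases Nat.eq_zero_or_pos k with rfl | hk
  · simpa using zero_rpow_le_one d
  · calc (k : ℝ) ^ d ≤ (k : ℝ) ^ (1 : ℝ) :=
          rpow_le_rpow_of_exponent_le (by exact_mod_cast hk) hd
      _ = k := rpow_one _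
      _ ≤ 2 ^ k := by exact_mod_cast (Nat.lt_two_pow_self (n := k)).le

lemma rpow_add_mul_rpow_sub_one_lt (hd0 : 0 < d) (hd1 : d < 1) {a : ℝ} (ha : 0 ≤ a) :
    a ^ d + d * (a + 1) ^ (d - 1) < (a + 1) ^ d := by
  have hb : 0 < a + 1 := by linarith
  have h := rpow_one_add_lt_one_add_mul_self (s := -1 / (a + 1))
    (by rw [neg_div, neg_le_neg_iff, div_le_one hb]; linarith) (by positivity) hd0 hd1
  rw [show 1 + -1 / (a + 1) = a / (a + 1) by field_simp; ring, div_rpow ha hb.le,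
    div_lt_iff₀ (rpow_pos_of_pos hb d)] at h
  rw [rpow_sub_one hb.ne']
  have hexpand : (1 + d * (-1 / (a + 1))) * (a + 1) ^ d =
      (a + 1) ^ d - d * ((a + 1) ^ d / (a + 1)) := by ring
  linarith

lemma add_mul_tsum_rpow_lt_mul_tsum_succ_rpow (hd0 : 0 < d) (hd1 : d < 1) {x : ℝ} (hx : 0 < x) :
    (x + d) * ∑' k : ℕ, (k : ℝ) ^ d * x ^ k / k ! <
      x * ∑' k : ℕ, ((k : ℝ) + 1) ^ d * x ^ k / k ! := by
  have hS := (summable_mul_pow_div_factorial (c := fun k : ℕ => (k : ℝ) ^ d) (C := 1) (r := 2)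
    (fun k => by simpa using abs_natCast_rpow_le_two_pow hd1.le k) x).hasSum
  have hS' := (summable_mul_pow_div_factorial (c := fun k : ℕ => ((k : ℝ) + 1) ^ d) (C := 2)
    (r := 2) (fun k => by
      have := abs_natCast_rpow_le_two_pow hd1.le (k + 1)
      push_cast at this
      rwa [pow_succ'] at this) x).hasSum
  have hSshift := (hasSum_nat_add_iff' 1).2 hS
  simp only [Finset.range_one, Finset.sum_singleton, CharP.cast_eq_zero, zero_rpow hd0.ne',
    zero_mul, zero_div, sub_zero] at hSshift
  have hcomb := ((hS'.mul_left x).sub (hS.mul_left x)).sub (hSshift.mul_left d)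
  have hterm : ∀ k : ℕ, 0 < x * (((k : ℝ) + 1) ^ d * x ^ k / k !) -
      x * ((k : ℝ) ^ d * x ^ k / k !) -
      d * (((k + 1 : ℕ) : ℝ) ^ d * x ^ (k + 1) / (k + 1)!) := by
    intro k
    have hk : (0 : ℝ) < k + 1 := by positivity
    have key := rpow_add_mul_rpow_sub_one_lt hd0 hd1 (Nat.cast_nonneg k)
    calc 0 < (((k : ℝ) + 1) ^ d - k ^ d - d * ((k : ℝ) + 1) ^ (d - 1)) * (x ^ (k + 1) / k !) :=
          mul_pos (by linarith) (by positivity)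
      _ = _ := by
        rw [rpow_sub_one hk.ne', Nat.factorial_succ]
        push_cast
        field_simp
        ring
  have := hasSum_lt (f := fun _ => 0) (fun k => (hterm k).le) (hterm 0) hasSum_zero hcomb
  push_cast at hS'
  rw [hS'.tsum_eq, hS.tsum_eq]
  linarith

/-- The paper's `α_φ(x) = E[Poi(x)^d] / x^d` for `φ(x) = x^d`. -/
noncomputable def poissonMomentRatio (d x : ℝ) : ℝ :=
  exp (-x) * (∑' k : ℕ, (k : ℝ) ^ d * x ^ k / k !) / x ^ d

lemma hasDerivAt_poissonMomentRatio (hd : d ≤ 1) {x : ℝ} (hx : 0 < x) :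
    HasDerivAt (poissonMomentRatio d)
      (exp (-x) * x ^ (d - 1) * (x * ∑' k : ℕ, ((k : ℝ) + 1) ^ d * x ^ k / (k !) -
        (x + d) * ∑' k : ℕ, (k : ℝ) ^ d * x ^ k / k !) / (x ^ d) ^ 2) x := by
  have hS := hasDerivAt_tsum_mul_pow_div_factorial (c := fun k : ℕ => (k : ℝ) ^ d) (C := 1)
    (r := 2) (fun k => by simpa using abs_natCast_rpow_le_two_pow hd k) x
  push_cast at hS
  refine (((hasDerivAt_neg' x).exp.mul hS).div (hasDerivAt_rpow_const (Or.inl hx.ne'))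
    (rpow_pos_of_pos hx d).ne').congr_deriv ?_
  rw [Pi.mul_apply, rpow_sub_one hx.ne']
  field_simp
  ring

lemma strictMonoOn_poissonMomentRatio (hd0 : 0 < d) (hd1 : d < 1) :
    StrictMonoOn (poissonMomentRatio d) (Ioi 0) := by
  refine strictMonoOn_of_deriv_pos (convex_Ioi 0)
    (fun x hx => (hasDerivAt_poissonMomentRatio hd1.le hx).continuousAt.continuousWithinAt)
    fun x hx => ?_
  rw [interior_Ioi] at hx
  rw [(hasDerivAt_poissonMomentRatio hd1.le hx).deriv]
  exact div_pos (mul_pos (mul_pos (exp_pos _) (rpow_pos_of_pos hx _))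
    (sub_pos.2 (add_mul_tsum_rpow_lt_mul_tsum_succ_rpow hd0 hd1 hx)))
    (pow_pos (rpow_pos_of_pos hx d) 2)

end PoissonMoment

/-- For `d ∈ (0,1)` and `φ(x) = x^d`, the ratio `α_φ(x) = E[Poi(x)^d]/x^d` is strictly
increasing on `[1,∞)`, so its minimum over positive integers is
`α_φ(1) = e^{-1} ∑_{k≥1} k^d/k!`. -/
theorem stmt12 (d : ℝ) (hd : d ∈ Set.Ioo (0 : ℝ) 1)
    (α : ℝ → ℝ)
    (hα : ∀ x : ℝ, α x =
      (∑' k : ℕ, Real.exp (-x) * x ^ k / (Nat.factorial k) * (k : ℝ) ^ d) / x ^ d) :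
    StrictMonoOn α (Set.Ici 1) ∧
      IsLeast {y : ℝ | ∃ n : ℕ, 1 ≤ n ∧ y = α n}
        (Real.exp (-1) * ∑' k : ℕ, (k : ℝ) ^ d / (Nat.factorial k)) := by
  obtain ⟨hd0, hd1⟩ := hd
  have hα_eq : α = poissonMomentRatio d := funext fun x => by
    rw [hα, poissonMomentRatio, ← tsum_mul_left]
    congr 1
    exact tsum_congr fun k => by ring
  have hmono : StrictMonoOn α (Ici 1) :=
    hα_eq ▸ (strictMonoOn_poissonMomentRatio hd0 hd1).mono (Ici_subset_Ioi.2 one_pos)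
  have hα_one : α 1 = exp (-1) * ∑' k : ℕ, (k : ℝ) ^ d / k ! := by
    rw [hα, one_rpow, div_one, ← tsum_mul_left]
    exact tsum_congr fun k => by ring
  refine ⟨hmono, ⟨1, le_rfl, by rw [Nat.cast_one, hα_one]⟩, ?_⟩
  rintro _ ⟨n, hn, rfl⟩
  rw [← hα_one]
  have hn' : (1 : ℝ) ≤ n := by exact_mod_cast hn
  exact hmono.monotoneOn (mem_Ici.2 le_rfl) (mem_Ici.2 hn') hn'
end

section
/- Let φ : ℕ → ℝ≥0 be nondecreasing, concave, normalized, extended piecewise linearly to ℝ≥0, and suppose φ is linear from some ℓ ≥ 1: φ(x) = φ(ℓ) + a(x - ℓ) for all x ≥ ℓ, with 0 ≤ a ≤ φ(ℓ) - φ(ℓ-1). Then α_φ(x) = E[φ(Poi(x))]/φ(x) admits the closed form α_φ(x) = (φ(ℓ) + a(x-ℓ))/φ(x) - (e^{-x}/φ(x))·(∑_{k=0}^{ℓ} (φ(ℓ) + a(x-ℓ) - φ(k)) x^k/k! - a·x^{ℓ+1}/ℓ!), and α_φ is nondecreasing on [ℓ, ∞); consequently α_φ = min_{x ∈ {1,…,ℓ}}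 α_φ(x). -/
/-!
Let `ψ k = φ ℓ + a (k - ℓ)` be the line that continues the linear tail of `φ`, and `g = ψ - φ`
(`lineGap`). Every slope of the concave `φ` is at least `a`, so `g` is nonincreasing; it vanishes
from `ℓ` on, hence `g ≥ 0`. As `E[ψ(Poi x)] = ψ x`, we get `E[φ(Poi x)] = ψ x - E[g(Poi x)]` with
`E[g(Poi x)] = e^{-x} ∑_{k ≤ ℓ} g k x^k/k!`; the telescoping identity
`∑_{k ≤ ℓ} (x - k) x^k/k! = x^{ℓ+1}/ℓ!` turns this into the closed form.
On `[ℓ, ∞)` the extension of `φ` is `ψ`, so `α_φ = 1 - E[g(Poi x)]/ψ x`. The numerator is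
nonnegative and nonincreasing in `x`, its derivative being `e^{-x} ∑ (g (k+1) - g k) x^k/k! ≤ 0`,
while the denominator is positive and nondecreasing.
-/

open Finset Real

theorem hasSum_pow_div_factorial (x : ℝ) : HasSum (fun k ↦ x ^ k / k.factorial) (exp x) := by
  rw [exp_eq_exp_ℝ]
  exact NormedSpace.expSeries_div_hasSum_exp x

theorem hasSum_natCast_mul_pow_div_factorial (x : ℝ) :
    HasSum (fun k : ℕ ↦ k * (x ^ k / k.factorial)) (x * exp x) := by
  rw [← hasSum_nat_add_iff' 1, sum_range_one, Nat.cast_zero, zero_mul, sub_zero]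
  refine ((hasSum_pow_div_factorial x).mul_left x).congr_fun fun k ↦ ?_
  rw [Nat.factorial_succ]
  push_cast
  field_simp
  ring

theorem sum_range_sub_mul_pow_div_factorial (x : ℝ) (n : ℕ) :
    ∑ k ∈ range (n + 1), (x - k) * (x ^ k / k.factorial) = x ^ (n + 1) / n.factorial := by
  induction n with
  | zero => simp
  | succ n ih =>
    rw [sum_range_succ, ih, Nat.factorial_succ]
    push_cast
    field_simp
    ring

theorem hasDerivAt_sum_range_mul_pow_div_factorial (c : ℕ → ℝ) (n : ℕ) (x : ℝ) :
    HasDerivAt (fun y ↦ ∑ k ∈ range (n + 1), c k * (y ^ k / k.factorial))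
      (∑ k ∈ range n, c (k + 1) * (x ^ k / k.factorial)) x := by
  induction n with
  | zero => simpa using hasDerivAt_const x (c 0)
  | succ n ih =>
    have hnext :=
      ((hasDerivAt_pow (n + 1) x).div_const ((n + 1).factorial : ℝ)).const_mul (c (n + 1))
    simp_rw [sum_range_succ _ (n + 1)]
    refine (ih.add hnext).congr_deriv ?_
    rw [sum_range_succ, Nat.factorial_succ]
    push_cast
    field_simp

theorem hasDerivAt_exp_neg_mul_sum_range (d : ℕ → ℝ) (n : ℕ) (hd : d (n + 1) = 0) (x : ℝ) :
    HasDerivAt (fun y ↦ exp (-y) * ∑ k ∈ range (n + 1), d k * (y ^ k / k.factorial))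
      (exp (-x) * ∑ k ∈ range (n + 1), (d (k + 1) - d k) * (x ^ k / k.factorial)) x := by
  have hexp : HasDerivAt (fun y ↦ exp (-y)) (-exp (-x)) x := by
    simpa using (hasDerivAt_neg x).exp
  refine (hexp.mul (hasDerivAt_sum_range_mul_pow_div_factorial d n x)).congr_deriv ?_
  simp only [sub_mul, sum_sub_distrib]
  rw [sum_range_succ (fun k ↦ d (k + 1) * _), hd]
  ring

theorem hasSum_poiExp_affine (c a x : ℝ) :
    HasSum (fun k : ℕ ↦ exp (-x) * x ^ k / k.factorial * (c + a * k)) (c + a * x) := by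
  have h := (((hasSum_pow_div_factorial x).mul_left c).add
    ((hasSum_natCast_mul_pow_div_factorial x).mul_left a)).mul_left (exp (-x))
  rw [show exp (-x) * (c * exp x + a * (x * exp x)) = c + a * x by
    rw [exp_neg]; field_simp] at h
  exact h.congr_fun fun k ↦ by ring

theorem hasSum_poiExp_of_eq_zero (d : ℕ → ℝ) (n : ℕ) (hd : ∀ k, n < k → d k = 0) (x : ℝ) :
    HasSum (fun k : ℕ ↦ exp (-x) * x ^ k / k.factorial * d k)
      (exp (-x) * ∑ k ∈ range (n + 1), d k * (x ^ k / k.factorial)) := by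
  rw [mul_sum]
  refine (hasSum_sum_of_ne_finset_zero fun k hk ↦ ?_).congr_fun fun k ↦ ?_
  · rw [mem_range, not_lt] at hk
    rw [hd k hk, zero_mul, mul_zero]
  · ring

theorem poiExp_nonneg {d : ℕ → ℝ} (hd : ∀ k, 0 ≤ d k) {x : ℝ} (hx : 0 ≤ x) : 0 ≤ poiExp d x :=
  tsum_nonneg fun k ↦ mul_nonneg (by positivity) (hd k)

theorem antitoneOn_poiExp {d : ℕ → ℝ} (hd : Antitone d) {n : ℕ} (h0 : ∀ k, n < k → d k = 0) :
    AntitoneOn (poiExp d) (Set.Ici 0) := by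
  have hq : poiExp d = fun y ↦ exp (-y) * ∑ k ∈ range (n + 1), d k * (y ^ k / k.factorial) :=
    funext fun y ↦ (hasSum_poiExp_of_eq_zero d n h0 y).tsum_eq
  have hderiv := hasDerivAt_exp_neg_mul_sum_range d n (h0 _ n.lt_succ_self)
  rw [hq]
  refine antitoneOn_of_hasDerivWithinAt_nonpos (convex_Ici 0)
    (fun x _ ↦ (hderiv x).continuousAt.continuousWithinAt) (fun x _ ↦ (hderiv x).hasDerivWithinAt)
    fun x hx ↦ mul_nonpos_of_nonneg_of_nonpos (exp_pos _).le <| sum_nonpos fun k _ ↦ ?_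
  rw [interior_Ici, Set.mem_Ioi] at hx
  exact mul_nonpos_of_nonpos_of_nonneg (sub_nonpos.2 (hd k.le_succ)) (by positivity)

def lineGap (φ : ℕ → ℝ) (ℓ : ℕ) (a : ℝ) (k : ℕ) : ℝ := φ ℓ + a * ((k : ℝ) - ℓ) - φ k

theorem sum_lineGap_mul_pow_div_factorial (φ : ℕ → ℝ) (ℓ : ℕ) (a x : ℝ) :
    ∑ k ∈ range (ℓ + 1), lineGap φ ℓ a k * (x ^ k / k.factorial) =
      ∑ k ∈ range (ℓ + 1), (φ ℓ + a * (x - ℓ) - φ k) * x ^ k / k.factorial -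
        a * x ^ (ℓ + 1) / ℓ.factorial := by
  rw [mul_div_assoc, ← sum_range_sub_mul_pow_div_factorial, mul_sum, ← sum_sub_distrib]
  exact sum_congr rfl fun _ _ ↦ by rw [lineGap]; ring

section LinearTail

variable {φ : ℕ → ℝ} {ℓ : ℕ} {a : ℝ}
  (hlin : ∀ k : ℕ, ℓ ≤ k → φ k = φ ℓ + a * ((k : ℝ) - (ℓ : ℝ)))
include hlin

theorem lineGap_eq_zero {k : ℕ} (hk : ℓ ≤ k) : lineGap φ ℓ a k = 0 := by
  rw [lineGap, hlin k hk, sub_self]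

theorem poiExp_lineGap (x : ℝ) :
    poiExp (lineGap φ ℓ a) x =
      exp (-x) * ∑ k ∈ range (ℓ + 1), lineGap φ ℓ a k * (x ^ k / k.factorial) :=
  (hasSum_poiExp_of_eq_zero _ ℓ (fun _ hk ↦ lineGap_eq_zero hlin hk.le) x).tsum_eq

theorem poiExp_eq_sub_poiExp_lineGap (x : ℝ) :
    poiExp φ x = φ ℓ + a * (x - ℓ) - poiExp (lineGap φ ℓ a) x := by
  have h := (hasSum_poiExp_affine (φ ℓ - a * ℓ) a x).sub
    (hasSum_poiExp_of_eq_zero _ ℓ (fun _ hk ↦ lineGap_eq_zero hlin hk.le) x)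
  rw [poiExp, poiExp_lineGap hlin, show φ ℓ + a * (x - ℓ) = φ ℓ - a * ℓ + a * x by ring]
  refine (h.congr_fun fun k ↦ ?_).tsum_eq
  rw [lineGap]
  ring

theorem phiExt_of_le {x : ℝ} (hx : ℓ ≤ x) : phiExt φ x = φ ℓ + a * (x - ℓ) := by
  have hfloor : ℓ ≤ ⌊x⌋₊ := Nat.le_floor hx
  rw [phiExt, hlin _ hfloor, hlin _ (hfloor.trans (Nat.le_succ _))]
  push_cast
  ring

section Concave

variable (hconc : ∀ k, φ (k + 2) - φ (k + 1) ≤ φ (k + 1) - φ k) (ha1 : a ≤ φ ℓ - φ (ℓ - 1))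
include hconc ha1

theorem le_succ_sub_of_concave (k : ℕ) : a ≤ φ (k + 1) - φ k := by
  rcases le_or_gt ℓ k with hk | hk
  · rw [hlin k hk, hlin (k + 1) (by omega)]
    push_cast
    linarith
  · have hslope : Antitone fun k ↦ φ (k + 1) - φ k := antitone_nat_of_succ_le hconc
    have := hslope (show k ≤ ℓ - 1 by omega)
    simp only [Nat.sub_add_cancel (by omega : 1 ≤ ℓ)] at this
    linarith

theorem lineGap_antitone : Antitone (lineGap φ ℓ a) :=
  antitone_nat_of_succ_le fun k ↦ by
    have := le_succ_sub_of_concave hlin hconc ha1 k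
    simp only [lineGap]
    push_cast
    linarith

theorem lineGap_nonneg (k : ℕ) : 0 ≤ lineGap φ ℓ a k :=
  calc 0 = lineGap φ ℓ a (max k ℓ) := (lineGap_eq_zero hlin (le_max_right k ℓ)).symm
    _ ≤ lineGap φ ℓ a k := lineGap_antitone hlin hconc ha1 (le_max_left k ℓ)

theorem alphaRatio_monotoneOn (hφ1 : φ 1 = 1) (hφmono : Monotone φ) (hℓ : 1 ≤ ℓ) (ha0 : 0 ≤ a) :
    MonotoneOn (alphaRatio φ) (Set.Ici ℓ) := by
  have hφℓ : 1 ≤ φ ℓ := hφ1 ▸ hφmono hℓ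
  have hℓ0 : (0 : ℝ) < ℓ := by exact_mod_cast hℓ
  have hline_pos : ∀ x : ℝ, ℓ ≤ x → 0 < φ ℓ + a * (x - ℓ) := fun x hx ↦ by nlinarith
  have hα : ∀ x : ℝ, ℓ ≤ x →
      alphaRatio φ x = 1 - poiExp (lineGap φ ℓ a) x / (φ ℓ + a * (x - ℓ)) := fun x hx ↦ by
    rw [alphaRatio, if_neg (by linarith), phiExt_of_le hlin hx,
      poiExp_eq_sub_poiExp_lineGap hlin, sub_div, div_self (hline_pos x hx).ne']
  intro x (hx : ℓ ≤ x) y (hy : ℓ ≤ y) hxy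
  have hx0 : 0 ≤ x := by linarith
  rw [hα x hx, hα y hy]
  refine sub_le_sub_left (div_le_div₀ (poiExp_nonneg (lineGap_nonneg hlin hconc ha1) hx0) ?_
    (hline_pos x hx) (by nlinarith)) 1
  exact antitoneOn_poiExp (lineGap_antitone hlin hconc ha1)
    (fun _ hk ↦ lineGap_eq_zero hlin hk.le) hx0 (hx0.trans hxy) hxy

end Concave

end LinearTail

theorem exists_forall_le_of_monotoneOn_Ici {f : ℝ → ℝ} {ℓ : ℕ} (hℓ : 1 ≤ ℓ)
    (hf : MonotoneOn f (Set.Ici ℓ)) : ∃ n : ℕ, 1 ≤ n ∧ n ≤ ℓ ∧ ∀ j : ℕ, 1 ≤ j → f n ≤ f j := by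
  have hℓ_mem : ℓ ∈ Icc 1 ℓ := mem_Icc.2 ⟨hℓ, le_rfl⟩
  obtain ⟨n, hn, hmin⟩ := (Icc 1 ℓ).exists_min_image (fun n : ℕ ↦ f n) ⟨ℓ, hℓ_mem⟩
  rw [mem_Icc] at hn
  refine ⟨n, hn.1, hn.2, fun j hj ↦ ?_⟩
  rcases le_or_gt j ℓ with hjℓ | hℓj
  · exact hmin j (mem_Icc.2 ⟨hj, hjℓ⟩)
  · have hℓj' : (ℓ : ℝ) ≤ j := by exact_mod_cast hℓj.le
    exact (hmin ℓ hℓ_mem).trans (hf Set.self_mem_Ici hℓj' hℓj')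

theorem stmt17_general (φ : ℕ → ℝ) (hφ1 : φ 1 = 1)
    (hφmono : Monotone φ)
    (hφconc : ∀ k, φ (k + 2) - φ (k + 1) ≤ φ (k + 1) - φ k)
    (ℓ : ℕ) (hℓ : 1 ≤ ℓ) (a : ℝ) (ha0 : 0 ≤ a) (ha1 : a ≤ φ ℓ - φ (ℓ - 1))
    (hlin : ∀ k : ℕ, ℓ ≤ k → φ k = φ ℓ + a * ((k : ℝ) - (ℓ : ℝ))) :
    (∀ x : ℝ, 0 < x →
        alphaRatio φ x =
          (φ ℓ + a * (x - ℓ)) / phiExt φ x -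
            Real.exp (-x) / phiExt φ x *
              ((∑ k ∈ Finset.range (ℓ + 1),
                  (φ ℓ + a * (x - ℓ) - φ k) * x ^ k / (Nat.factorial k)) -
                a * x ^ (ℓ + 1) / (Nat.factorial ℓ))) ∧
      MonotoneOn (alphaRatio φ) (Set.Ici (ℓ : ℝ)) ∧
      ∃ n : ℕ, 1 ≤ n ∧ n ≤ ℓ ∧
        ∀ j : ℕ, 1 ≤ j → alphaRatio φ (n : ℝ) ≤ alphaRatio φ (j : ℝ) := by
  have hmono := alphaRatio_monotoneOn hlin hφconc ha1 hφ1 hφmono hℓ ha0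
  refine ⟨fun x hx ↦ ?_, hmono, exists_forall_le_of_monotoneOn_Ici hℓ hmono⟩
  rw [alphaRatio, if_neg hx.ne', poiExp_eq_sub_poiExp_lineGap hlin, poiExp_lineGap hlin,
    sum_lineGap_mul_pow_div_factorial, sub_div, div_mul_eq_mul_div]

/-- If `φ` is linear from `ℓ` with slope `a`, then `α_φ` has an explicit closed form,
is nondecreasing on `[ℓ, ∞)`, and consequently `α_φ = min_{x ∈ {1,…,ℓ}} α_φ(x)`. -/
theorem stmt17 (φ : ℕ → ℝ) (hφnn : ∀ k, 0 ≤ φ k) (hφ0 : φ 0 = 0) (hφ1 : φ 1 = 1)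
    (hφmono : Monotone φ)
    (hφconc : ∀ k, φ (k + 2) - φ (k + 1) ≤ φ (k + 1) - φ k)
    (ℓ : ℕ) (hℓ : 1 ≤ ℓ) (a : ℝ) (ha0 : 0 ≤ a) (ha1 : a ≤ φ ℓ - φ (ℓ - 1))
    (hlin : ∀ k : ℕ, ℓ ≤ k → φ k = φ ℓ + a * ((k : ℝ) - (ℓ : ℝ))) :
    (∀ x : ℝ, 0 < x →
        alphaRatio φ x =
          (φ ℓ + a * (x - ℓ)) / phiExt φ x -
            Real.exp (-x) / phiExt φ x *
              ((∑ k ∈ Finset.range (ℓ + 1),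
                  (φ ℓ + a * (x - ℓ) - φ k) * x ^ k / (Nat.factorial k)) -
                a * x ^ (ℓ + 1) / (Nat.factorial ℓ))) ∧
      MonotoneOn (alphaRatio φ) (Set.Ici (ℓ : ℝ)) ∧
      ∃ n : ℕ, 1 ≤ n ∧ n ≤ ℓ ∧
        ∀ j : ℕ, 1 ≤ j → alphaRatio φ (n : ℝ) ≤ alphaRatio φ (j : ℝ) :=
  stmt17_general φ hφ1 hφmono hφconc ℓ hℓ a ha0 ha1 hlin
end
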